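/- arXiv:1301.7188 — 7 statements merged into one kernel-verified Lean document; each statement's English description precedes it below -/
import Mathlib

section
/- Let n ≥ 5 and let k ≥ 1. For every word w in the free group F_k of rank k, the verbal image w(Sym(n)) contains the identity, is invariant under every automorphism of Sym(n), and moreover if w(Sym(n)) contains an odd permutation then w(Sym(n)) contains every element of Sym(n) whose order is a power of 2. -/
/-- The verbal image of a word `w ∈ F_k` over a group `G`: the set of all values of the
induced word map `G^k → G`. -/
def verbalImage {k : ℕ} (w : FreeGroup (Fin k)) (G : Type*) [Group G] : Set G :=
  {x : G | ∃ f : Fin k → G, FreeGroup.lift f w = x}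

/-- Exponent sum of generator `i` in the word `w`. -/
noncomputable def expSum {k : ℕ} (i : Fin k) (w : FreeGroup (Fin k)) : ℤ :=
  Multiplicative.toAdd
    (FreeGroup.lift (fun j => if j = i then Multiplicative.ofAdd (1:ℤ) else 1) w)

lemma lift_single {k : ℕ} (i : Fin k) (w : FreeGroup (Fin k)) {G : Type*} [Group G] (g : G) :
    FreeGroup.lift (fun j => if j = i then g else 1) w = g ^ (expSum i w) := by
  have h : (zpowersHom G g).comp
      (FreeGroup.lift (fun j => if j = i then Multiplicative.ofAdd (1:ℤ) else 1)) =
      FreeGroup.lift (fun j => if j = i then g else 1) := by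
    apply FreeGroup.ext_hom
    intro j
    simp only [MonoidHom.comp_apply, FreeGroup.lift_apply_of]
    split <;> simp [zpowersHom_apply]
  rw [← h]
  simp [expSum, zpowersHom_apply]

lemma lift_eq_prod {k : ℕ} (f : Fin k → ℤˣ) (w : FreeGroup (Fin k)) :
    FreeGroup.lift f w = ∏ i, FreeGroup.lift (fun j => if j = i then f i else 1) w := by
  have h : FreeGroup.lift f =
      ∏ i, FreeGroup.lift (fun j => if j = i then f i else 1) := by
    apply FreeGroup.ext_hom
    intro j
    rw [MonoidHom.finset_prod_apply]
    simp [FreeGroup.lift_apply_of]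
  rw [h, MonoidHom.finset_prod_apply]

lemma map_lift {k : ℕ} {G : Type*} [Group G] (φ : MulAut G) (f : Fin k → G)
    (w : FreeGroup (Fin k)) : φ (FreeGroup.lift f w) = FreeGroup.lift (⇑φ ∘ f) w := by
  have h : (MulEquiv.toMonoidHom φ).comp (FreeGroup.lift f) = FreeGroup.lift (⇑φ ∘ f) := by
    apply FreeGroup.ext_hom; intro j; simp
  calc φ (FreeGroup.lift f w) = ((MulEquiv.toMonoidHom φ).comp (FreeGroup.lift f)) w := rfl
    _ = _ := by rw [h]

/-- For `n ≥ 5`, `k ≥ 1` and any word `w ∈ F_k`, the verbal image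
`w(Sym(n))` contains the identity, is invariant under every automorphism of `Sym(n)`,
and if it contains an odd permutation then it contains every element of `2`-power order. -/
theorem verbal_image_symmetric_group (n k : ℕ) (hn : 5 ≤ n) (hk : 1 ≤ k)
    (w : FreeGroup (Fin k)) :
    (1 : Equiv.Perm (Fin n)) ∈ verbalImage w (Equiv.Perm (Fin n)) ∧
    (∀ φ : MulAut (Equiv.Perm (Fin n)),
      ⇑φ '' verbalImage w (Equiv.Perm (Fin n)) = verbalImage w (Equiv.Perm (Fin n))) ∧
    ((∃ x ∈ verbalImage w (Equiv.Perm (Fin n)), Equiv.Perm.sign x = -1) →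
      ∀ g : Equiv.Perm (Fin n), (∃ m : ℕ, orderOf g = 2 ^ m) →
        g ∈ verbalImage w (Equiv.Perm (Fin n))) := by
  refine ⟨?_, ?_, ?_⟩
  · -- identity
    refine ⟨fun _ => 1, ?_⟩
    have h : (FreeGroup.lift fun _ : Fin k => (1 : Equiv.Perm (Fin n))) = 1 :=
      FreeGroup.ext_hom _ _ (by simp)
    rw [h]; rfl
  · -- Aut-invariance
    intro φ
    ext x
    constructor
    · rintro ⟨y, ⟨f, hf⟩, rfl⟩
      exact ⟨⇑φ ∘ f, by rw [← map_lift, hf]⟩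
    · rintro ⟨f, hf⟩
      refine ⟨φ⁻¹ x, ⟨⇑φ⁻¹ ∘ f, ?_⟩, by simp⟩
      rw [← map_lift, hf]
  · -- odd permutation case
    rintro ⟨x, ⟨f, hf⟩, hsign⟩ g ⟨m, hm⟩
    -- sign of x as a product of contributions of each generator
    set s : Fin k → ℤˣ := fun i => Equiv.Perm.sign (f i) with hs
    have hsl : FreeGroup.lift s w = -1 := by
      have h : (Equiv.Perm.sign (α := Fin n)).comp (FreeGroup.lift f) = FreeGroup.lift s :=
        FreeGroup.ext_hom _ _ (by simp [hs])
      calc FreeGroup.lift s w = Equiv.Perm.sign (FreeGroup.lift f w) := by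
            rw [← h]; rfl
        _ = -1 := by rw [hf, hsign]
    rw [lift_eq_prod] at hsl
    -- find an index with factor -1
    have hex : ∃ i : Fin k,
        FreeGroup.lift (fun j => if j = i then s i else 1) w = -1 := by
      by_contra hc
      push_neg at hc
      have hall : ∀ i : Fin k,
          FreeGroup.lift (fun j => if j = i then s i else 1) w = 1 := by
        intro i
        rcases Int.units_eq_one_or (FreeGroup.lift (fun j => if j = i then s i else 1) w)
          with h | h
        · exact h
        · exact absurd h (hc i)
      rw [Finset.prod_eq_one fun i _ => hall i] at hsl
      exact absurd hsl (by decide)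
    obtain ⟨i, hi⟩ := hex
    -- s i must be -1, and the exponent sum of generator i is odd
    rw [lift_single] at hi
    set e : ℤ := expSum i w with he
    have hsi : s i = -1 := by
      rcases Int.units_eq_one_or (s i) with h | h
      · rw [h, one_zpow] at hi; exact absurd hi (by decide)
      · exact h
    rw [hsi] at hi
    have hodd : Odd e := by
      rcases Int.even_or_odd e with he2 | he2
      · obtain ⟨c, hc⟩ := he2
        exfalso
        rw [hc, zpow_add, ← sq, Int.units_sq] at hi
        exact absurd hi (by decide)
      · exact he2
    -- e is coprime to 2^m
    have hcop : IsCoprime e ((2:ℤ) ^ m) := by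
      refine IsCoprime.pow_right ?_
      have h2 : ¬ (2:ℤ) ∣ e := by
        rw [Int.odd_iff] at hodd
        omega
      exact ((Int.prime_two.coprime_iff_not_dvd).2 h2).symm
    obtain ⟨a, b, hab⟩ := hcop
    -- g^(2^m) = 1
    have hg1 : g ^ ((2:ℤ) ^ m) = 1 := by
      have : g ^ (2 ^ m : ℕ) = 1 := by rw [← hm]; exact pow_orderOf_eq_one g
      rw [show ((2:ℤ) ^ m) = ((2 ^ m : ℕ) : ℤ) by push_cast; ring, zpow_natCast, this]
    refine ⟨fun j => if j = i then g ^ a else 1, ?_⟩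
    rw [lift_single, ← he, ← zpow_mul]
    calc g ^ (a * e) = g ^ (a * e) * (g ^ ((2:ℤ)^m)) ^ b := by rw [hg1]; simp
      _ = g ^ (a * e + 2^m * b) := by rw [← zpow_mul, ← zpow_add]
      _ = g ^ (1:ℤ) := by rw [show a * e + 2^m * b = 1 by linarith]
      _ = g := zpow_one g
end

section
/- Let G be a finite group with a normal subgroup S such that S is a nonabelian simple group, the centralizer of S in G is trivial, and the quotient G/S is solvable. Let k, n ≥ 1 and let a_{i,j} ∈ G for 1 ≤ i ≤ k and 1 ≤ j ≤ n. For each j let B_j = ⟨a_{1,j}, ..., a_{k,j}⟩ and assume S ≤ B_j. Assume further that for all 1 ≤ j < l ≤ n there is no group isomorphism α : B_j → B_l with α(a_{i,j}) = a_{i,l} for all 1 ≤ i ≤ k. For 1 ≤ i ≤ k set h_i = (a_{i,1}, ..., a_{i,n}) ∈ G^n, and let H = ⟨h_1, ..., h_k⟩ ≤ G^n. Then H contains the subgroup M = {f ∈ G^n : f(j) ∈ S for all j}, i.e. M = S × ... × S (n copies) ≤ H. -/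
/-! Write `π_j : H → B_j` for the coordinate maps. For `j ≠ l` the image `π_j(H ∩ ker π_l)` is
normalised by `B_j ≥ S`, so, as `C_G(S) = 1`, it is trivial or contains `S`. If it is trivial
in both directions, then `ker π_j = ker π_l` and `π_l ∘ π_j⁻¹ : B_j ≅ B_l` sends each `a_{i,j}`
to `a_{i,l}`, which is excluded. If it is trivial only for `(j, l)`, then `π_j` factors through
`h ↦ π_l(h) S`, so `B_j` is a section of `G/S` and solvable, impossible since `S ≤ B_j`.
Hence `π_j(H ∩ ker π_l) ≥ S` for all `l ≠ j`, and since `S` is perfect, commutators of these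
kernels give `π_j(H ∩ ⋂_{l ≠ j} ker π_l) ≥ S`: the `j`-th copy of `S` lies in `H`. -/

open scoped commutatorElement

variable {G H : Type*} [Group G] [Group H]

namespace MonoidHom

theorem isSolvable_range_of_ker_le {Q : Type*} [Group Q] [Group.IsSolvable Q] (θ : H →* Q)
    (p : H →* G) (h : θ.ker ≤ p.ker) : Group.IsSolvable p.range :=
  have := Group.isSolvable_of_isSolvable_injective (QuotientGroup.kerLift_injective θ)
  Group.isSolvable_of_surjective <| QuotientGroup.lift_surjective_of_surjective θ.ker
    p.rangeRestrict p.rangeRestrict_surjective (by rwa [ker_rangeRestrict])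

noncomputable def rangeMulEquivOfKerEq {K : Type*} [Group K] (p : H →* G) (q : H →* K)
    (h : p.ker = q.ker) : p.range ≃* q.range :=
  (QuotientGroup.quotientKerEquivRange p).symm.trans
    ((QuotientGroup.quotientMulEquivOfEq h).trans (QuotientGroup.quotientKerEquivRange q))

theorem rangeMulEquivOfKerEq_rangeRestrict {K : Type*} [Group K] (p : H →* G) (q : H →* K)
    (h : p.ker = q.ker) (x : H) :
    p.rangeMulEquivOfKerEq q h (p.rangeRestrict x) = q.rangeRestrict x := by
  rw [rangeMulEquivOfKerEq, MulEquiv.trans_apply,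
    show (QuotientGroup.quotientKerEquivRange p).symm (p.rangeRestrict x) = x from
      (MulEquiv.symm_apply_eq _).mpr rfl]
  rfl

end MonoidHom

namespace Subgroup

theorem le_map_iInf_ker_of_commutator_self_eq {ι : Type*} {S : Subgroup G} (hperf : ⁅S, S⁆ = S)
    (p : ι → H →* G) {j : ι} (hj : S ≤ (p j).range) (T : Finset ι)
    (hT : ∀ l ∈ T, S ≤ (p l).ker.map (p j)) : S ≤ (⨅ l ∈ T, (p l).ker).map (p j) := by
  classical
  induction T using Finset.induction_on with
  | empty => simpa [← MonoidHom.range_eq_map] using hj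
  | insert m T _ ih =>
    have : (⨅ l ∈ T, (p l).ker).Normal :=
      normal_iInf_normal fun l => normal_iInf_normal fun _ => inferInstance
    rw [Finset.iInf_insert]
    calc S = ⁅S, S⁆ := hperf.symm
      _ ≤ ⁅(p m).ker.map (p j), (⨅ l ∈ T, (p l).ker).map (p j)⁆ :=
        commutator_mono (hT m (Finset.mem_insert_self m T))
          (ih fun l hl => hT l (Finset.mem_insert_of_mem hl))
      _ = ⁅(p m).ker, ⨅ l ∈ T, (p l).ker⁆.map (p j) := (map_commutator _ _ _).symm
      _ ≤ _ := map_mono (commutator_le_inf _ _)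

section SimpleNormal

variable {S : Subgroup G} [hS : S.Normal]

theorem eq_bot_or_le_of_le_normalizer (hsimple : IsSimpleGroup S)
    (hcent : centralizer (S : Set G) = ⊥) {N : Subgroup G} (hSN : S ≤ normalizer (N : Set G)) :
    N = ⊥ ∨ S ≤ N := by
  have hconj : ∀ s ∈ S, ∀ n ∈ N, s * n * s⁻¹ ∈ N := fun s hs n hn =>
    (mem_normalizer_iff.mp (hSN hs) n).mp hn
  have : (N.subgroupOf S).Normal :=
    ⟨fun n hn s => mem_subgroupOf.mpr (hconj s s.2 n hn)⟩
  rcases hsimple.eq_bot_or_eq_top_of_normal _ this with hbot | htop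
  · refine Or.inl (le_bot_iff.mp (hcent ▸ fun n hn => mem_centralizer_iff.mpr fun s hs => ?_))
    have hN : ⁅n, s⁆ ∈ N := by
      rw [commutatorElement_def, mul_assoc, mul_assoc]
      exact mul_mem hn (by simpa [mul_assoc] using hconj s hs n⁻¹ (inv_mem hn))
    have hS' : ⁅n, s⁆ ∈ S := mul_mem (hS.conj_mem s hs n) (inv_mem hs)
    have h1 : ⁅n, s⁆ = 1 := (disjoint_def.mp (subgroupOf_eq_bot.mp hbot)) hN hS'
    exact (commutatorElement_eq_one_iff_mul_comm.mp h1).symm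
  · exact Or.inr (subgroupOf_eq_top.mp htop)

theorem commutator_self_eq_self (hsimple : IsSimpleGroup S)
    (hcent : centralizer (S : Set G) = ⊥) (hnonab : ∃ x y : S, x * y ≠ y * x) : ⁅S, S⁆ = S := by
  refine le_antisymm (commutator_le_left S S) ?_
  refine (eq_bot_or_le_of_le_normalizer hsimple hcent ?_).resolve_left fun h => ?_
  · rw [normalizer_eq_top]
    exact le_top
  · obtain ⟨x, y, hxy⟩ := hnonab
    exact hxy (Subtype.ext (commutator_eq_bot_iff_le_centralizer.mp h y.2 x x.2))

theorem le_map_ker_or_ker_le (hsimple : IsSimpleGroup S) (hcent : centralizer (S : Set G) = ⊥)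
    (p q : H →* G) (hp : S ≤ p.range) : S ≤ q.ker.map p ∨ q.ker ≤ p.ker := by
  have hnorm : S ≤ normalizer ((q.ker.map p : Subgroup G) : Set G) := by
    rw [MonoidHom.range_eq_map, ← normalizer_eq_top (H := q.ker)] at hp
    exact hp.trans (le_normalizer_map p)
  rw [← map_eq_bot_iff]
  exact (eq_bot_or_le_of_le_normalizer hsimple hcent hnorm).symm

theorem isSolvable_range_of_ker_le_of_le_map [Group.IsSolvable (G ⧸ S)] {p q : H →* G}
    (hqp : q.ker ≤ p.ker) (hSp : S ≤ p.ker.map q) : Group.IsSolvable p.range := by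
  refine MonoidHom.isSolvable_range_of_ker_le ((QuotientGroup.mk' S).comp q) p fun x hx => ?_
  obtain ⟨y, hy, hyx⟩ := hSp ((QuotientGroup.eq_one_iff _).mp hx)
  have hxy : x * y⁻¹ ∈ p.ker := hqp (by simp [MonoidHom.mem_ker, hyx])
  simpa [MonoidHom.mem_ker.mp hy] using hxy

theorem le_map_ker_or_ker_eq (hsimple : IsSimpleGroup S) (hcent : centralizer (S : Set G) = ⊥)
    (hnonab : ∃ x y : S, x * y ≠ y * x) [Group.IsSolvable (G ⧸ S)] (p q : H →* G)
    (hp : S ≤ p.range) (hq : S ≤ q.range) : S ≤ q.ker.map p ∨ p.ker = q.ker := by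
  refine (le_map_ker_or_ker_le hsimple hcent p q hp).imp_right fun hqp => le_antisymm ?_ hqp
  refine (le_map_ker_or_ker_le hsimple hcent q p hq).resolve_left fun hSp => ?_
  have := isSolvable_range_of_ker_le_of_le_map hqp hSp
  have := Group.isSolvable_of_isSolvable_injective (inclusion_injective hp)
  obtain ⟨x, y, hxy⟩ := hnonab
  exact hxy (IsSimpleGroup.comm_iff_isSolvable.mpr this x y)

end SimpleNormal

variable {ι : Type*}

def evalHom (K : Subgroup (ι → G)) (j : ι) : K →* G :=
  (Pi.evalMonoidHom (fun _ => G) j).comp K.subtype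

@[simp]
theorem evalHom_apply (K : Subgroup (ι → G)) (j : ι) (x : K) : K.evalHom j x = (x : ι → G) j :=
  rfl

theorem range_evalHom_closure {κ : Type*} (a : κ → ι → G) (j : ι) :
    ((closure (Set.range a)).evalHom j).range = closure (Set.range fun i => a i j) := by
  rw [evalHom, MonoidHom.range_comp, range_subtype, MonoidHom.map_closure, ← Set.range_comp]
  rfl

theorem pi_le_of_le_map_iInf_ker [Fintype ι] [DecidableEq ι] {S : Subgroup G}
    (K : Subgroup (ι → G))
    (h : ∀ j, S ≤ (⨅ l ∈ ({j}ᶜ : Finset ι), (K.evalHom l).ker).map (K.evalHom j)) :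
    pi Set.univ (fun _ => S) ≤ K := by
  refine pi_le_iff.mpr fun j => ?_
  rintro _ ⟨s, hs, rfl⟩
  obtain ⟨x, hx, rfl⟩ := h j hs
  convert x.2
  funext l
  rcases eq_or_ne l j with rfl | hl
  · simp
  · have hxl : x ∈ (K.evalHom l).ker := mem_iInf.mp (mem_iInf.mp hx l) (by simpa using hl)
    simpa [Pi.mulSingle_eq_of_ne hl] using (MonoidHom.mem_ker.mp hxl).symm

theorem pi_le_of_pairwise_ker_evalHom_ne [Fintype ι] {S : Subgroup G} [S.Normal]
    (hsimple : IsSimpleGroup S) (hcent : centralizer (S : Set G) = ⊥)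
    (hnonab : ∃ x y : S, x * y ≠ y * x) [Group.IsSolvable (G ⧸ S)] (K : Subgroup (ι → G))
    (hK : ∀ j, S ≤ (K.evalHom j).range)
    (hker : Pairwise fun j l => (K.evalHom j).ker ≠ (K.evalHom l).ker) :
    pi Set.univ (fun _ => S) ≤ K := by
  classical
  refine pi_le_of_le_map_iInf_ker K fun j => le_map_iInf_ker_of_commutator_self_eq
    (commutator_self_eq_self hsimple hcent hnonab) _ (hK j) _ fun l hl => ?_
  exact (le_map_ker_or_ker_eq hsimple hcent hnonab _ _ (hK j) (hK l)).resolve_right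
    (hker (by simpa [eq_comm] using hl))

theorem exists_mulEquiv_closure_of_ker_evalHom_eq {κ : Type*} (a : κ → ι → G) {j l : ι}
    (h : ((closure (Set.range a)).evalHom j).ker = ((closure (Set.range a)).evalHom l).ker) :
    ∃ α : closure (Set.range fun i => a i j) ≃* closure (Set.range fun i => a i l),
      ∀ i, (α ⟨a i j, subset_closure (Set.mem_range_self i)⟩ : G) = a i l := by
  refine ⟨(MulEquiv.subgroupCongr (range_evalHom_closure a j)).symm.trans
    ((MonoidHom.rangeMulEquivOfKerEq _ _ h).trans
      (MulEquiv.subgroupCongr (range_evalHom_closure a l))), fun i => ?_⟩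
  have : (MulEquiv.subgroupCongr (range_evalHom_closure a j)).symm
      ⟨a i j, subset_closure (Set.mem_range_self i)⟩ =
      ((closure (Set.range a)).evalHom j).rangeRestrict
        ⟨a i, subset_closure (Set.mem_range_self i)⟩ := rfl
  simp [this, MonoidHom.rangeMulEquivOfKerEq_rangeRestrict]

end Subgroup

theorem subdirect_product_contains_socle_power_general (G : Type) [Group G]
    (S : Subgroup G) [hN : S.Normal]
    (hsimple : IsSimpleGroup S)
    (hnonab : ∃ x y : S, x * y ≠ y * x)
    (hcent : Subgroup.centralizer (S : Set G) = ⊥)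
    (hsolv : IsSolvable (G ⧸ S))
    (k n : ℕ)
    (a : Fin k → Fin n → G)
    (hB : ∀ j : Fin n, S ≤ Subgroup.closure (Set.range fun i => a i j))
    (hindep : ∀ j l : Fin n, j < l →
      ¬ ∃ α : (Subgroup.closure (Set.range fun i => a i j)) ≃*
              (Subgroup.closure (Set.range fun i => a i l)),
        ∀ i : Fin k,
          (α ⟨a i j, Subgroup.subset_closure (Set.mem_range_self i)⟩ : G) = a i l) :
    Subgroup.pi Set.univ (fun _ => S) ≤ Subgroup.closure (Set.range a) := by
  have : Group.IsSolvable (G ⧸ S) := hsolv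
  refine Subgroup.pi_le_of_pairwise_ker_evalHom_ne hsimple hcent hnonab _
    (fun j => Subgroup.range_evalHom_closure a j ▸ hB j) fun j l hjl hker => ?_
  rcases hjl.lt_or_gt with hlt | hgt
  · exact hindep j l hlt (Subgroup.exists_mulEquiv_closure_of_ker_evalHom_eq a hker)
  · exact hindep l j hgt (Subgroup.exists_mulEquiv_closure_of_ker_evalHom_eq a hker.symm)

/-- Lemma 2, adapted from Abért: Let `G` be finite with `S ⊴ G` nonabelian
simple, `C_G(S) = 1` and `G/S` solvable. Given tuples `(a 1 j, ..., a k j)` each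
generating a subgroup `B_j ≥ S`, pairwise automorphism independent, the subgroup of `G^n`
generated by the elements `h_i = (a i 1, ..., a i n)` contains `M = S × ... × S`. -/
theorem subdirect_product_contains_socle_power (G : Type) [Group G] [Fintype G]
    (S : Subgroup G) [hN : S.Normal]
    (hsimple : IsSimpleGroup S)
    (hnonab : ∃ x y : S, x * y ≠ y * x)
    (hcent : Subgroup.centralizer (S : Set G) = ⊥)
    (hsolv : IsSolvable (G ⧸ S))
    (k n : ℕ) (hk : 1 ≤ k) (hn : 1 ≤ n)
    (a : Fin k → Fin n → G)
    (hB : ∀ j : Fin n, S ≤ Subgroup.closure (Set.range fun i => a i j))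
    (hindep : ∀ j l : Fin n, j < l →
      ¬ ∃ α : (Subgroup.closure (Set.range fun i => a i j)) ≃*
              (Subgroup.closure (Set.range fun i => a i l)),
        ∀ i : Fin k,
          (α ⟨a i j, Subgroup.subset_closure (Set.mem_range_self i)⟩ : G) = a i l) :
    Subgroup.pi Set.univ (fun _ => S) ≤ Subgroup.closure (Set.range a) :=
  subdirect_product_contains_socle_power_general G S (hN := hN) hsimple hnonab hcent hsolv k n a hB
    hindep
end

section
/- Let G be a finite group with a normal subgroup S such that S is a nonabelian simple group and the centralizer of S in G is trivial. Let n ≥ 1, let M = {f ∈ G^n : f(j) ∈ S for all j} ≤ G^n, and let H be a subgroup of G^n with M ≤ H. Let K be a normal subgroup of H, and for each j let π_j : G^n → G denote projection to the j-th coordinate. Then K ∩ M = ∏_{j : π_j(K) ≠ 1} S_j; that is, an element f of M lies in K if and only if f(j) = 1 for every index j with π_j(K) trivial. -/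
/-!
If the `j`-th projection of `K` is nontrivial, pick `k ∈ K` with `k j ≠ 1`. Since `C_G(S) = 1`
some `s ∈ S` fails to commute with `k j`, and the commutator of `k` with the copy of `s` in
coordinate `j` is a nontrivial element of `K ∩ S_j`. As `K` is normalized by `S_j`, the elements
of `S` whose copy in coordinate `j` lies in `K` form a nontrivial normal subgroup of the simple
group `S`, hence all of `S`. So `K` contains every `S_j` with `π_j(K) ≠ 1`, and these generate
the right-hand side.
-/

open Subgroup
open scoped commutatorElement

theorem Pi.commutatorElement_mulSingle_left {ι G : Type*} [DecidableEq ι] [Group G]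
    (j : ι) (s : G) (k : ι → G) :
    ⁅(Pi.mulSingle j s : ι → G), k⁆ = Pi.mulSingle j ⁅s, k j⁆ := by
  ext i
  rcases eq_or_ne i j with rfl | hij
  · simp [commutatorElement_def]
  · simp [commutatorElement_def, Pi.mulSingle_eq_of_ne hij]

theorem Subgroup.comap_normal_of_forall_conj_mem {A B : Type*} [Group A] [Group B] (φ : A →* B)
    {K : Subgroup B} (hK : ∀ a, ∀ x ∈ K, φ a * x * (φ a)⁻¹ ∈ K) : (K.comap φ).Normal :=
  ⟨fun x hx a => by simpa using hK a _ hx⟩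

section CoordinateSlice

variable {ι G : Type*} [DecidableEq ι] [Group G]

def coordinateSlice (S : Subgroup G) (K : Subgroup (ι → G)) (j : ι) : Subgroup S :=
  K.comap ((MonoidHom.mulSingle (fun _ => G) j).comp S.subtype)

variable {S : Subgroup G} {K : Subgroup (ι → G)} {j : ι}

theorem coordinateSlice_normal
    (hK : ∀ s ∈ S, ∀ x ∈ K, Pi.mulSingle j s * x * (Pi.mulSingle j s)⁻¹ ∈ K) :
    (coordinateSlice S K j).Normal :=
  comap_normal_of_forall_conj_mem _ fun s => hK s s.2

theorem coordinateSlice_ne_bot [S.Normal] (hcent : centralizer (S : Set G) = ⊥)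
    (hK : ∀ s ∈ S, ∀ x ∈ K, Pi.mulSingle j s * x * (Pi.mulSingle j s)⁻¹ ∈ K)
    (hj : K.map (Pi.evalMonoidHom (fun _ => G) j) ≠ ⊥) :
    coordinateSlice S K j ≠ ⊥ := by
  obtain ⟨⟨_, k, hk, rfl⟩, hkj_ne⟩ := (ne_bot_iff_exists_ne_one).1 hj
  have hkj : k j ∉ centralizer (S : Set G) := by
    rw [hcent, mem_bot]
    simpa using hkj_ne
  obtain ⟨s, hs, hsk⟩ : ∃ s ∈ S, ⁅s, k j⁆ ≠ 1 := by
    simpa [mem_centralizer_iff, commutatorElement_eq_one_iff_mul_comm, eq_comm] using hkj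
  have hmem : ⁅s, k j⁆ ∈ S :=
    commutator_le_left S ⊤ (commutator_mem_commutator hs (mem_top (k j)))
  refine (ne_bot_iff_exists_ne_one).2 ⟨⟨⟨_, hmem⟩, ?_⟩, ?_⟩
  · change Pi.mulSingle j ⁅s, k j⁆ ∈ K
    rw [← Pi.commutatorElement_mulSingle_left, commutatorElement_def]
    exact K.mul_mem (hK s hs k hk) (K.inv_mem hk)
  · simpa [Subtype.ext_iff] using hsk

theorem mulSingle_mem_of_map_eval_ne_bot [S.Normal] (hsimple : IsSimpleGroup S)
    (hcent : centralizer (S : Set G) = ⊥)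
    (hK : ∀ s ∈ S, ∀ x ∈ K, Pi.mulSingle j s * x * (Pi.mulSingle j s)⁻¹ ∈ K)
    (hj : K.map (Pi.evalMonoidHom (fun _ => G) j) ≠ ⊥) {s : G} (hs : s ∈ S) :
    Pi.mulSingle j s ∈ K := by
  have htop : coordinateSlice S K j = ⊤ :=
    (hsimple.eq_bot_or_eq_top_of_normal _ (coordinateSlice_normal hK)).resolve_left
      (coordinateSlice_ne_bot hcent hK hj)
  exact (eq_top_iff' _).1 htop ⟨s, hs⟩

end CoordinateSlice

theorem normal_subgroup_inter_socle_power_general (G : Type) [Group G]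
    (S : Subgroup G) [hN : S.Normal]
    (hsimple : IsSimpleGroup S)
    (hcent : Subgroup.centralizer (S : Set G) = ⊥)
    (n : ℕ)
    (H K : Subgroup (Fin n → G))
    (hMH : Subgroup.pi Set.univ (fun _ => S) ≤ H)
    (hKnorm : ∀ h ∈ H, ∀ x ∈ K, h * x * h⁻¹ ∈ K)
    (f : Fin n → G) (hf : ∀ j, f j ∈ S) :
    f ∈ K ↔ ∀ j : Fin n,
      Subgroup.map (Pi.evalMonoidHom (fun _ : Fin n => G) j) K = ⊥ → f j = 1 := by
  have hK : ∀ j, ∀ s ∈ S, ∀ x ∈ K, Pi.mulSingle j s * x * (Pi.mulSingle j s)⁻¹ ∈ K :=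
    fun j s hs => hKnorm _ (hMH ((mulSingle_mem_pi (H := fun _ => S) j s).2 fun _ => hs))
  constructor
  · intro hfK j hj
    simpa [hj] using mem_map_of_mem (Pi.evalMonoidHom (fun _ : Fin n => G) j) hfK
  · intro hcond
    refine pi_mem_of_mulSingle_mem f fun j => ?_
    by_cases hj : map (Pi.evalMonoidHom (fun _ : Fin n => G) j) K = ⊥
    · simp [hcond j hj, K.one_mem]
    · exact mulSingle_mem_of_map_eval_ne_bot hsimple hcent (hK j) hj (hf j)

/-- Lemma 3, from Abért: Let `G` be finite with `S ⊴ G` nonabelian simple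
and `C_G(S) = 1`. Let `M = S × ... × S ≤ H ≤ G^n` and let `K` be a normal subgroup of
`H`. Then `K ∩ M = ∏_{π_j(K) ≠ 1} S_j`: an element `f` of `M` lies in `K` iff `f j = 1`
for every coordinate `j` with `π_j(K)` trivial. -/
theorem normal_subgroup_inter_socle_power (G : Type) [Group G] [Fintype G]
    (S : Subgroup G) [hN : S.Normal]
    (hsimple : IsSimpleGroup S)
    (hnonab : ∃ x y : S, x * y ≠ y * x)
    (hcent : Subgroup.centralizer (S : Set G) = ⊥)
    (n : ℕ) (hn : 1 ≤ n)
    (H K : Subgroup (Fin n → G))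
    (hMH : Subgroup.pi Set.univ (fun _ => S) ≤ H)
    (hKH : K ≤ H)
    (hKnorm : ∀ h ∈ H, ∀ x ∈ K, h * x * h⁻¹ ∈ K)
    (f : Fin n → G) (hf : ∀ j, f j ∈ S) :
    f ∈ K ↔ ∀ j : Fin n,
      Subgroup.map (Pi.evalMonoidHom (fun _ : Fin n => G) j) K = ⊥ → f j = 1 :=
  normal_subgroup_inter_socle_power_general G S (hN := hN) hsimple hcent n H K hMH hKnorm f hf
end

section
/- Let S be a finite perfect group whose quotient S/Z(S) by its center is a nonabelian simple group, and suppose every automorphism of S/Z(S) is induced by an automorphism of S. In the direct product P = ∏_{(a,b) ∈ S×S} S (one copy of S for each ordered pair of elements of S), let h₁ be the element with coordinate a at position (a,b), let h₂ be the element with coordinate b at position (a,b), and let H = ⟨h₁, h₂⟩ ≤ P. Then for every function c : S × S → S satisfying (i) c(a,b) = 1 whenever ⟨a,b⟩ ≠ S, and (ii) c(φ(a)z₁, φ(b)z₂) = φ(c(a,b)) for every automorphism φ of S, all central elements z₁, z₂ ∈ Z(S), and all a,b ∈ S, the element c lies in H. -/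
/-!
Write `H = ⟨h₁, h₂⟩`, `Z = Z(S)` and `T = S/Z`, and call `(a, b)` and `(φ a * z₁, φ b * z₂)`
equivalent. Central translates disappear in commutators, so every element of `[H, H]` satisfies
(ii) on the nose; it therefore suffices to find, for each generating pair `r`, an element of
`[H, H]` equal to `c` on the class of `r` and to `1` elsewhere, and to multiply these together.
As `S` is perfect, it is enough that the elements of `H` trivial off the class of `r` take every
value at `r`. Those values form a normal subgroup of `S`, so either they exhaust `S` or they are
central. In the central case `h ↦ h(r) Z` kills the intersection of the kernels of the
evaluations at the finitely many `q` outside the class; since `T` is simple with trivial centre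
it already kills one of them, and a counting argument turns this into `h(r) Z = ψ (h(q) Z)` for
an automorphism `ψ` of `T`. Lifting `ψ` to `S` and evaluating at `h₁` and `h₂` puts `r` in the
class of `q`, a contradiction.
-/

open Subgroup Function
open scoped commutatorElement

section GroupTheory

variable {G : Type*} [Group G]

theorem commutatorElement_mul_mul_of_mem_center {a b z w : G} (hz : z ∈ center G)
    (hw : w ∈ center G) : ⁅a * z, b * w⁆ = ⁅a, b⁆ := by
  have hz' := mem_center_iff.mp hz
  have hw' := mem_center_iff.mp hw
  calc ⁅a * z, b * w⁆ = a * (z * (b * w)) * z⁻¹ * a⁻¹ * w⁻¹ * b⁻¹ := by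
        simp only [commutatorElement_def, mul_inv_rev, mul_assoc]
    _ = a * b * (w * a⁻¹) * w⁻¹ * b⁻¹ := by rw [← hz' (b * w)]; group
    _ = ⁅a, b⁆ := by rw [← hw' a⁻¹, commutatorElement_def]; group

theorem eq_top_of_sup_center_eq_top (hG : commutator G = ⊤) {C : Subgroup G}
    (hC : C ⊔ center G = ⊤) : C = ⊤ := by
  refine eq_top_iff.mpr (hG ▸ (commutator_le.mpr fun g₁ _ g₂ _ => ?_))
  obtain ⟨c₁, hc₁, z₁, hz₁, rfl⟩ := mem_sup_of_normal_right.mp (hC ▸ mem_top g₁)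
  obtain ⟨c₂, hc₂, z₂, hz₂, rfl⟩ := mem_sup_of_normal_right.mp (hC ▸ mem_top g₂)
  rw [commutatorElement_mul_mul_of_mem_center hz₁ hz₂]
  exact C.commutator_le_self (commutator_mem_commutator hc₁ hc₂)

theorem Subgroup.Normal.le_center_or_eq_top (hG : _root_.commutator G = ⊤)
    [IsSimpleGroup (G ⧸ center G)] {N : Subgroup G} (hN : N.Normal) :
    N ≤ center G ∨ N = ⊤ := by
  have hπ := QuotientGroup.mk'_surjective (center G)
  refine (IsSimpleGroup.eq_bot_or_eq_top_of_normal _ (hN.map _ hπ)).imp (fun h => ?_) fun h => ?_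
  · rwa [map_eq_bot_iff, QuotientGroup.ker_mk'] at h
  · refine eq_top_of_sup_center_eq_top hG ?_
    rw [← QuotientGroup.ker_mk' (center G), ← comap_map_eq, h, comap_top]

theorem center_eq_bot_of_isSimpleGroup [IsSimpleGroup G] (hG : ∃ x y : G, x * y ≠ y * x) :
    center G = ⊥ := by
  refine (IsSimpleGroup.eq_bot_or_eq_top_of_normal _ inferInstance).resolve_right fun h => ?_
  obtain ⟨x, y, hxy⟩ := hG
  exact hxy (mem_center_iff.mp (h ▸ mem_top y) x)

theorem commutator_le_eqLocus_of_le_eqLocus_mk {T : Type*} [Group T] (α β : T →* G) {K : Subgroup T}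
    (hK : K ≤ MonoidHom.eqLocus ((QuotientGroup.mk' (center G)).comp α)
      ((QuotientGroup.mk' (center G)).comp β)) :
    ⁅K, K⁆ ≤ MonoidHom.eqLocus α β := by
  have hcentral : ∀ g ∈ K, ∃ z ∈ center G, β g * z = α g := fun g hg =>
    (QuotientGroup.mk'_eq_mk' _).mp (hK hg).symm
  refine commutator_le.mpr fun g₁ hg₁ g₂ hg₂ => ?_
  obtain ⟨z₁, hz₁, h₁⟩ := hcentral g₁ hg₁
  obtain ⟨z₂, hz₂, h₂⟩ := hcentral g₂ hg₂
  change α ⁅g₁, g₂⁆ = β ⁅g₁, g₂⁆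
  rw [map_commutatorElement, map_commutatorElement, ← h₁, ← h₂,
    commutatorElement_mul_mul_of_mem_center hz₁ hz₂]

theorem Subgroup.Normal.map_inf {G' : Type*} [Group G'] {f : G →* G'} {H D : Subgroup G}
    (hD : D.Normal) (hH : H.map f = ⊤) : ((H ⊓ D).map f).Normal := by
  refine ⟨?_⟩
  rintro _ ⟨x, hx, rfl⟩ g
  obtain ⟨hxH, hxD⟩ := mem_inf.mp hx
  obtain ⟨h, hh, rfl⟩ := hH ▸ mem_top g
  exact ⟨h * x * h⁻¹, mem_inf.mpr ⟨mul_mem (mul_mem hh hxH) (inv_mem hh), hD.conj_mem x hxD h⟩,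
    by simp⟩

theorem MulEquiv.apply_mem_center (φ : G ≃* G) {z : G} (hz : z ∈ center G) : φ z ∈ center G :=
  characteristic_iff_le_comap.mp inferInstance φ hz

theorem map_commutator_eq_top_of_map_eq_top {T : Type*} [Group T] (hG : commutator G = ⊤)
    {f : T →* G} {K : Subgroup T} (hK : K.map f = ⊤) : ⁅K, K⁆.map f = ⊤ := by
  rw [map_commutator, hK, ← commutator_def, hG]

end GroupTheory

section Centerless

variable {G T : Type*} [Group G] [Group T] {θ : G →* T}

theorem le_ker_of_commutator_le_ker (hT : center T = ⊥) {A B : Subgroup G}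
    (hB : B.map θ = ⊤) (h : ⁅A, B⁆ ≤ θ.ker) : A ≤ θ.ker := by
  rw [← Subgroup.map_eq_bot_iff, ← le_bot_iff, ← hT, ← commutator_top_right_eq_bot_iff_le_center,
    ← hB, ← map_commutator, Subgroup.map_eq_bot_iff]
  exact h

theorem comap_center_le_ker_of_ker_le {S' : Type*} [Group S'] (hT : center T = ⊥)
    (hθ : Surjective θ) {e : G →* S'} (h : e.ker ≤ θ.ker) : (center S').comap e ≤ θ.ker := by
  refine le_ker_of_commutator_le_ker hT (B := ⊤) (map_top_of_surjective θ hθ) ?_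
  refine commutator_le.mpr fun d hd g _ => h ?_
  rw [MonoidHom.mem_ker, map_commutatorElement, commutatorElement_eq_one_iff_mul_comm]
  exact (mem_center_iff.mp hd (e g)).symm

theorem exists_le_ker_of_iInf_le_ker [IsSimpleGroup T] (hT : center T = ⊥) (hθ : Surjective θ)
    {ι : Type*} (N : ι → Subgroup G) [hN : ∀ i, (N i).Normal] (F : Finset ι)
    (h : ⨅ i ∈ F, N i ≤ θ.ker) : ∃ i ∈ F, N i ≤ θ.ker := by
  classical
  induction F using Finset.induction_on with
  | empty =>
    obtain ⟨t, ht⟩ := exists_ne (1 : T)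
    obtain ⟨g, rfl⟩ := hθ t
    exact absurd (h (by simp)) ht
  | insert i F _ ih =>
    have hK : (⨅ j ∈ F, N j).Normal := normal_iInf_normal fun j => normal_iInf_normal fun _ => hN j
    simp only [Finset.iInf_insert] at h
    rcases IsSimpleGroup.eq_bot_or_eq_top_of_normal _ (hK.map θ hθ) with hbot | htop
    · obtain ⟨j, hj, hjθ⟩ := ih ((Subgroup.map_eq_bot_iff _).mp hbot)
      exact ⟨j, Finset.mem_insert_of_mem hj, hjθ⟩
    · exact ⟨i, Finset.mem_insert_self i F,
        le_ker_of_commutator_le_ker hT htop ((commutator_le_inf _ _).trans h)⟩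

end Centerless

theorem exists_mulEquiv_apply_eq_of_ker_le {G T : Type*} [Group G] [Group T] [Finite T]
    {f g : G →* T} (hg : Surjective g) (h : f.ker ≤ g.ker) : ∃ ψ : T ≃* T, ∀ x, ψ (f x) = g x := by
  have hindex : g.ker.index = Nat.card T := by
    rw [index_ker, MonoidHom.range_eq_top_of_surjective g hg, Subgroup.card_top]
  -- `|T| = [G : ker g] ≤ [G : ker f] = |f(G)| ≤ |T|`, with strict inequality if `ker f < ker g`.
  have hker : f.ker = g.ker := by
    refine h.eq_of_not_lt fun hlt => (index_strictAnti hlt).not_ge ?_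
    rw [hindex, index_ker]
    exact card_le_card_group _
  have hf : Surjective f := by
    rw [← MonoidHom.range_eq_top, ← Subgroup.card_eq_iff_eq_top, ← index_ker, hker, hindex]
  refine ⟨((QuotientGroup.quotientKerEquivOfSurjective f hf).symm.trans
    (QuotientGroup.quotientMulEquivOfEq hker)).trans
    (QuotientGroup.quotientKerEquivOfSurjective g hg), fun x => ?_⟩
  have hx : (QuotientGroup.quotientKerEquivOfSurjective f hf).symm (f x) = x :=
    (MulEquiv.symm_apply_eq _).mpr rfl
  rw [MulEquiv.trans_apply, MulEquiv.trans_apply, hx]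
  rfl

theorem Subgroup.mem_of_forall_mulIndicator_mem {ι G : Type*} [Group G] [Finite ι]
    (s : Setoid ι) {M : Subgroup (ι → G)} {c : ι → G}
    (h : ∀ i, {j | s i j}.mulIndicator c ∈ M) : c ∈ M := by
  classical
  have : Fintype (Quotient s) := Fintype.ofFinite _
  suffices ∀ F : Finset (Quotient s), {j | Quotient.mk s j ∈ F}.mulIndicator c ∈ M by
    simpa using this Finset.univ
  intro F
  induction F using Finset.induction_on with
  | empty => simp [← Pi.one_def]
  | insert x F hx ih =>
    obtain ⟨i, rfl⟩ := Quotient.exists_rep x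
    have hclass : ∀ j, Quotient.mk s j = ⟦i⟧ ↔ s i j := fun j => Quotient.eq.trans ⟨s.symm, s.symm⟩
    have hunion :
        {j | Quotient.mk s j ∈ insert ⟦i⟧ F} = {j | s i j} ∪ {j | Quotient.mk s j ∈ F} := by
      ext j
      simp [hclass]
    have hdisj : Disjoint {j | s i j} {j | Quotient.mk s j ∈ F} :=
      Set.disjoint_left.mpr fun j hij hjF => hx ((hclass j).mpr hij ▸ hjF)
    rw [hunion, Set.mulIndicator_union_of_disjoint hdisj]
    exact mul_mem (h i) ih

section ProjSubgroup

variable (S : Type*) [Group S]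

def projSubgroup : Subgroup (S × S → S) :=
  closure {fun p : S × S => p.1, fun p : S × S => p.2}

def autCenterSetoid : Setoid (S × S) where
  r p q := ∃ φ : MulAut S, ∃ z₁ ∈ center S, ∃ z₂ ∈ center S, q = (φ p.1 * z₁, φ p.2 * z₂)
  iseqv := by
    refine ⟨fun p => ⟨1, 1, one_mem _, 1, one_mem _, by simp⟩, ?_, ?_⟩
    · rintro p _ ⟨φ, z₁, hz₁, z₂, hz₂, rfl⟩
      refine ⟨φ⁻¹, (φ⁻¹ z₁)⁻¹, inv_mem (φ⁻¹.apply_mem_center hz₁),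
        (φ⁻¹ z₂)⁻¹, inv_mem (φ⁻¹.apply_mem_center hz₂), ?_⟩
      simp
    · rintro p _ _ ⟨φ, z₁, hz₁, z₂, hz₂, rfl⟩ ⟨ψ, w₁, hw₁, w₂, hw₂, rfl⟩
      exact ⟨ψ * φ, ψ z₁ * w₁, mul_mem (ψ.apply_mem_center hz₁) hw₁,
        ψ z₂ * w₂, mul_mem (ψ.apply_mem_center hz₂) hw₂, by simp [mul_assoc]⟩

def LiftsCentralQuotientAut : Prop :=
  ∀ ψ : MulAut (S ⧸ center S), ∃ φ : MulAut S,
    ∀ x : S, ψ (QuotientGroup.mk x) = QuotientGroup.mk (φ x)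

variable {S}

def supportedOnClass (r : S × S) : Subgroup (S × S → S) :=
  pi {q | ¬ autCenterSetoid S r q} fun _ => ⊥

instance supportedOnClass.normal (r : S × S) : (supportedOnClass r).Normal :=
  ⟨fun x hx g q hq => by simp [mem_bot.mp (hx q hq)]⟩

theorem map_eval_projSubgroup (p : S × S) :
    (projSubgroup S).map (Pi.evalMonoidHom _ p) = closure {p.1, p.2} := by
  rw [projSubgroup, MonoidHom.map_closure, Set.image_pair]
  rfl

def projEval (p : S × S) : projSubgroup S →* S :=
  (Pi.evalMonoidHom (fun _ => S) p).comp (projSubgroup S).subtype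

theorem surjective_projEval {r : S × S} (hr : closure {r.1, r.2} = ⊤) :
    Surjective (projEval r) := by
  rw [← MonoidHom.range_eq_top, projEval, MonoidHom.range_comp, range_subtype,
    map_eval_projSubgroup, hr]

theorem closure_pair_eq_top_of_autCenterSetoid (hS : commutator S = ⊤) {p q : S × S}
    (hpq : autCenterSetoid S p q) (hp : closure {p.1, p.2} = ⊤) : closure {q.1, q.2} = ⊤ := by
  obtain ⟨φ, z₁, hz₁, z₂, hz₂, rfl⟩ := hpq
  have himage : closure {φ p.1, φ p.2} = ⊤ := by
    rw [← Set.image_pair, ← MulEquiv.coe_toMonoidHom, ← MonoidHom.map_closure, hp]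
    exact map_top_of_surjective _ φ.surjective
  refine eq_top_of_sup_center_eq_top hS (eq_top_iff.mpr (himage ▸ (closure_le _).mpr ?_))
  have hcancel : ∀ {x z : S}, z ∈ center S → x * z ∈ closure {φ p.1 * z₁, φ p.2 * z₂} →
      x ∈ closure {φ p.1 * z₁, φ p.2 * z₂} ⊔ center S := fun {x z} hz hxz =>
    mul_inv_cancel_right x z ▸ mul_mem (mem_sup_left hxz) (mem_sup_right (inv_mem hz))
  rintro _ (rfl | rfl)
  · exact hcancel hz₁ (subset_closure (Set.mem_insert _ _))
  · exact hcancel hz₂ (subset_closure (Set.mem_insert_of_mem _ rfl))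

theorem apply_of_mem_commutator_projSubgroup (φ : MulAut S) {z₁ z₂ : S} (hz₁ : z₁ ∈ center S)
    (hz₂ : z₂ ∈ center S) (p : S × S) {f : S × S → S}
    (hf : f ∈ ⁅projSubgroup S, projSubgroup S⁆) : f (φ p.1 * z₁, φ p.2 * z₂) = φ (f p) := by
  refine commutator_le_eqLocus_of_le_eqLocus_mk (Pi.evalMonoidHom _ (φ p.1 * z₁, φ p.2 * z₂))
    (φ.toMonoidHom.comp (Pi.evalMonoidHom _ p)) ((closure_le _).mpr ?_) hf
  rintro _ (rfl | rfl)
  · exact QuotientGroup.mk_mul_of_mem _ hz₁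
  · exact QuotientGroup.mk_mul_of_mem _ hz₂

end ProjSubgroup

section Quasisimple

variable {S : Type*} [Group S] [Finite S]

theorem autCenterSetoid_of_ker_le (hT : center (S ⧸ center S) = ⊥)
    (hlift : LiftsCentralQuotientAut S) {q r : S × S} (hr : closure {r.1, r.2} = ⊤)
    (hker : (projEval q).ker ≤ ((QuotientGroup.mk' (center S)).comp (projEval r)).ker) :
    autCenterSetoid S q r := by
  have hsurj : Surjective ((QuotientGroup.mk' (center S)).comp (projEval r)) :=
    (QuotientGroup.mk'_surjective _).comp (surjective_projEval hr)
  have hker' : ((QuotientGroup.mk' (center S)).comp (projEval q)).ker ≤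
      ((QuotientGroup.mk' (center S)).comp (projEval r)).ker := by
    rw [← MonoidHom.comap_ker, QuotientGroup.ker_mk']
    exact comap_center_le_ker_of_ker_le hT hsurj hker
  obtain ⟨ψ, hψ⟩ := exists_mulEquiv_apply_eq_of_ker_le hsurj hker'
  obtain ⟨φ, hφ⟩ := hlift ψ
  have hcoord : ∀ f ∈ projSubgroup S, ∃ z ∈ center S, φ (f q) * z = f r := fun f hf =>
    (QuotientGroup.mk'_eq_mk' _).mp ((hφ (f q)).symm.trans (hψ ⟨f, hf⟩))
  obtain ⟨z₁, hz₁, h₁⟩ := hcoord _ (subset_closure (Set.mem_insert _ _))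
  obtain ⟨z₂, hz₂, h₂⟩ := hcoord _ (subset_closure (Set.mem_insert_of_mem _ rfl))
  exact ⟨φ, z₁, hz₁, z₂, hz₂, Prod.ext h₁.symm h₂.symm⟩

theorem map_eval_projSubgroup_inf_supportedOnClass_eq_top (hS : commutator S = ⊤)
    [IsSimpleGroup (S ⧸ center S)] (hT : center (S ⧸ center S) = ⊥)
    (hlift : LiftsCentralQuotientAut S) {r : S × S} (hr : closure {r.1, r.2} = ⊤) :
    (projSubgroup S ⊓ supportedOnClass r).map (Pi.evalMonoidHom _ r) = ⊤ := by
  classical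
  have := Fintype.ofFinite S
  have hN := (supportedOnClass.normal r).map_inf ((map_eval_projSubgroup r).trans hr)
  refine (hN.le_center_or_eq_top hS).resolve_left fun hle => ?_
  have hsurj : Surjective ((QuotientGroup.mk' (center S)).comp (projEval r)) :=
    (QuotientGroup.mk'_surjective _).comp (surjective_projEval hr)
  have hiInf : ⨅ q ∈ Finset.univ.filter (fun q => ¬ autCenterSetoid S r q), (projEval q).ker ≤
      ((QuotientGroup.mk' (center S)).comp (projEval r)).ker := by
    intro f hf
    have hfD : (f : S × S → S) ∈ supportedOnClass r := fun q hq =>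
      mem_iInf.mp (mem_iInf.mp hf q) (Finset.mem_filter.mpr ⟨Finset.mem_univ q, hq⟩)
    rw [MonoidHom.mem_ker, MonoidHom.comp_apply, ← MonoidHom.mem_ker, QuotientGroup.ker_mk']
    exact hle ⟨f, mem_inf.mpr ⟨f.2, hfD⟩, rfl⟩
  obtain ⟨q, hq, hker⟩ := exists_le_ker_of_iInf_le_ker hT hsurj _ _ hiInf
  exact (Finset.mem_filter.mp hq).2
    ((autCenterSetoid S).symm (autCenterSetoid_of_ker_le hT hlift hr hker))

theorem map_eval_commutator_projSubgroup_inf_supportedOnClass_eq_top (hS : commutator S = ⊤)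
    [IsSimpleGroup (S ⧸ center S)] (hT : center (S ⧸ center S) = ⊥)
    (hlift : LiftsCentralQuotientAut S) {r : S × S} (hr : closure {r.1, r.2} = ⊤) :
    (⁅projSubgroup S, projSubgroup S⁆ ⊓ supportedOnClass r).map (Pi.evalMonoidHom _ r) = ⊤ := by
  refine top_le_iff.mp ((map_commutator_eq_top_of_map_eq_top hS
    (map_eval_projSubgroup_inf_supportedOnClass_eq_top hS hT hlift hr)).ge.trans (map_mono ?_))
  exact le_inf (commutator_mono inf_le_left inf_le_left) ((commutator_le_self _).trans inf_le_right)

theorem mulIndicator_mem_commutator_projSubgroup (hS : commutator S = ⊤)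
    [IsSimpleGroup (S ⧸ center S)] (hT : center (S ⧸ center S) = ⊥)
    (hlift : LiftsCentralQuotientAut S) {c : S × S → S}
    (hc1 : ∀ a b : S, closure {a, b} ≠ ⊤ → c (a, b) = 1)
    (hc2 : ∀ (φ : MulAut S) (z₁ z₂ : S), z₁ ∈ center S → z₂ ∈ center S →
      ∀ a b : S, c (φ a * z₁, φ b * z₂) = φ (c (a, b))) (p : S × S) :
    {q | autCenterSetoid S p q}.mulIndicator c ∈ ⁅projSubgroup S, projSubgroup S⁆ := by
  by_cases hp : closure {p.1, p.2} = ⊤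
  · obtain ⟨f, hf, hfp⟩ :=
      map_eval_commutator_projSubgroup_inf_supportedOnClass_eq_top hS hT hlift hp ▸ mem_top (c p)
    obtain ⟨hfH, hfD⟩ := mem_inf.mp hf
    convert hfH using 1
    ext q
    by_cases hq : q ∈ {q | autCenterSetoid S p q}
    · rw [Set.mulIndicator_of_mem hq]
      obtain ⟨φ, z₁, hz₁, z₂, hz₂, rfl⟩ := hq
      rw [hc2 φ z₁ z₂ hz₁ hz₂, apply_of_mem_commutator_projSubgroup φ hz₁ hz₂ p hfH]
      exact congrArg φ hfp.symm
    · rw [Set.mulIndicator_of_notMem hq, mem_bot.mp (hfD q hq)]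
  · convert one_mem ⁅projSubgroup S, projSubgroup S⁆ using 1
    ext q
    by_cases hq : q ∈ {q | autCenterSetoid S p q}
    · refine (Set.mulIndicator_of_mem hq c).trans (hc1 q.1 q.2 fun hq' => hp ?_)
      exact closure_pair_eq_top_of_autCenterSetoid hS ((autCenterSetoid S).symm hq) hq'
    · exact Set.mulIndicator_of_notMem hq c

end Quasisimple

/-- Proposition 6: Let `S` be a finite quasisimple group (perfect with
nonabelian simple central quotient) such that every automorphism of `S/Z(S)` lifts to
an automorphism of `S`. In `P = ∏_{(a,b) ∈ S×S} S`, let `H` be generated by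
`h₁ = (a)_{(a,b)}` and `h₂ = (b)_{(a,b)}`. Then every function `c : S × S → S` vanishing
on non-generating pairs and equivariant under automorphisms and central translations lies
in `H`. -/
theorem diagonal_subgroups_in_H_quasisimple (S : Type) [Group S] [Fintype S]
    (hperf : commutator S = ⊤)
    (hsimple : IsSimpleGroup (S ⧸ Subgroup.center S))
    (hnonab : ∃ x y : S ⧸ Subgroup.center S, x * y ≠ y * x)
    (hlift : ∀ ψ : MulAut (S ⧸ Subgroup.center S), ∃ φ : MulAut S,
      ∀ x : S, ψ (QuotientGroup.mk x) = QuotientGroup.mk (φ x))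
    (c : S × S → S)
    (hc1 : ∀ a b : S, Subgroup.closure {a, b} ≠ ⊤ → c (a, b) = 1)
    (hc2 : ∀ (φ : MulAut S) (z₁ z₂ : S), z₁ ∈ Subgroup.center S → z₂ ∈ Subgroup.center S →
      ∀ a b : S, c (φ a * z₁, φ b * z₂) = φ (c (a, b))) :
    c ∈ Subgroup.closure
      ({fun p : S × S => p.1, fun p : S × S => p.2} : Set (S × S → S)) := by
  have hT := center_eq_bot_of_isSimpleGroup hnonab
  refine (projSubgroup S).commutator_le_self (mem_of_forall_mulIndicator_mem (autCenterSetoid S) ?_)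
  exact mulIndicator_mem_commutator_projSubgroup hperf hT hlift hc1 hc2
end

section
/- Let G be a finite group with a normal subgroup S such that S is a nonabelian simple group and the quotient G/S is solvable. Let H be a subgroup of G and suppose S occurs as a section of H, i.e. there exist subgroups K₁ ⊴ K₂ ≤ H with K₂/K₁ isomorphic to S. Then S ≤ H. -/
/-!
The image of `S ⊓ K₂` in the simple group `K₂ ⧸ K₁` is normal, hence trivial or everything. If it
were trivial, `K₂ ⧸ K₁` would be a quotient of `K₂ ⧸ (S ⊓ K₂)`, which embeds in the solvable group
`G ⧸ S`; but `K₂ ⧸ K₁ ≅ S` is not solvable. So `S ⊓ K₂` maps onto a copy of `S`, which by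
finiteness forces `S ⊓ K₂ = S`.
-/

namespace Subgroup

variable {G : Type*} [Group G]

instance isSolvable_quotient_subgroupOf (N : Subgroup G) [N.Normal] [Group.IsSolvable (G ⧸ N)]
    (K : Subgroup G) : Group.IsSolvable (K ⧸ N.subgroupOf K) :=
  Group.isSolvable_of_isSolvable_injective (f := QuotientGroup.map _ N K.subtype le_rfl) <| by
    rintro ⟨x⟩ ⟨y⟩ hxy
    exact QuotientGroup.eq.mpr (QuotientGroup.eq.mp hxy :)

theorem map_mk'_eq_top_of_not_isSolvable {L N : Subgroup G} [L.Normal] [N.Normal]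
    [IsSimpleGroup (G ⧸ L)] [Group.IsSolvable (G ⧸ N)] (hL : ¬ Group.IsSolvable (G ⧸ L)) :
    N.map (QuotientGroup.mk' L) = ⊤ := by
  refine ((‹N.Normal›.map _ (QuotientGroup.mk'_surjective L)).eq_bot_or_eq_top).resolve_left ?_
  intro hbot
  have hNL : N ≤ L := fun x hx => by simpa [hbot] using mem_map_of_mem (QuotientGroup.mk' L) hx
  refine hL (Group.isSolvable_of_surjective (f := QuotientGroup.map N L (MonoidHom.id G) hNL) ?_)
  rintro ⟨x⟩
  exact ⟨x, rfl⟩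

theorem le_of_card_le_card_subgroupOf {S K : Subgroup G} [Finite S]
    (h : Nat.card S ≤ Nat.card (S.subgroupOf K)) : S ≤ K := by
  rw [← card_map_of_injective K.subtype_injective, subgroupOf_map_subtype] at h
  exact inf_eq_left.mp (eq_of_le_of_card_ge inf_le_left h)

end Subgroup

theorem socle_le_of_section_iso_socle_general (G : Type) [Group G] [Fintype G]
    (S : Subgroup G) [hN : S.Normal]
    (hsimple : IsSimpleGroup S)
    (hnonab : ∃ x y : S, x * y ≠ y * x)
    (hsolv : IsSolvable (G ⧸ S))
    (H K₁ K₂ : Subgroup G) (hK₂H : K₂ ≤ H)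
    [hnorm : (K₁.subgroupOf K₂).Normal]
    (hiso : Nonempty ((K₂ ⧸ K₁.subgroupOf K₂) ≃* S)) :
    S ≤ H := by
  obtain ⟨e⟩ := hiso
  have : Group.IsSolvable (G ⧸ S) := hsolv
  have : IsSimpleGroup (K₂ ⧸ K₁.subgroupOf K₂) := e.isSimpleGroup
  have hQ : ¬ Group.IsSolvable (K₂ ⧸ K₁.subgroupOf K₂) := fun _ => by
    obtain ⟨x, y, hxy⟩ := hnonab
    exact hxy <| IsSimpleGroup.comm_iff_isSolvable.mpr
      (Group.isSolvable_of_surjective (f := e.toMonoidHom) e.surjective) x y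
  have hmap_top := Subgroup.map_mk'_eq_top_of_not_isSolvable (N := S.subgroupOf K₂) hQ
  have hcard : Nat.card S ≤ Nat.card (S.subgroupOf K₂) := calc
    Nat.card S = Nat.card (⊤ : Subgroup (K₂ ⧸ K₁.subgroupOf K₂)) := by
      rw [Subgroup.card_top, Nat.card_congr e.toEquiv]
    _ ≤ Nat.card (S.subgroupOf K₂) := hmap_top ▸
      Nat.card_le_card_of_surjective _ ((QuotientGroup.mk' _).subgroupMap_surjective _)
  exact (Subgroup.le_of_card_le_card_subgroupOf hcard).trans hK₂H

/-- Let `G` be finite with `S ⊴ G` nonabelian simple and `G/S` solvable.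
If a subgroup `H ≤ G` has `S` as a section (there are `K₁ ⊴ K₂ ≤ H` with `K₂/K₁ ≅ S`),
then `S ≤ H`. -/
theorem socle_le_of_section_iso_socle (G : Type) [Group G] [Fintype G]
    (S : Subgroup G) [hN : S.Normal]
    (hsimple : IsSimpleGroup S)
    (hnonab : ∃ x y : S, x * y ≠ y * x)
    (hsolv : IsSolvable (G ⧸ S))
    (H K₁ K₂ : Subgroup G) (hK₂H : K₂ ≤ H) (hK₁K₂ : K₁ ≤ K₂)
    [hnorm : (K₁.subgroupOf K₂).Normal]
    (hiso : Nonempty ((K₂ ⧸ K₁.subgroupOf K₂) ≃* S)) :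
    S ≤ H :=
  socle_le_of_section_iso_socle_general G S (hN := hN) hsimple hnonab hsolv H K₁ K₂ hK₂H
    (hnorm := hnorm) hiso
end

section
/- Let G be a finite nonabelian simple group and let v be any word in the free group F_2. Then there exists a word w ∈ F_2 such that for all a, b ∈ G: w(a,b) = v(a,b) if ⟨a,b⟩ = G, and w(a,b) = 1 otherwise. -/
open Subgroup

private lemma exists_ker_le_aux {A G : Type*} [Group A] [Group G]
    (hnonab : ∃ x y : G, x * y ≠ y * x) (hsimple : IsSimpleGroup G)
    {ι : Type*} [DecidableEq ι] (s : Finset ι) (N : ι → Subgroup A) (hN : ∀ i, (N i).Normal)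
    (φ : A →* G) (hφ : Function.Surjective φ)
    (h : (⨅ i ∈ s, N i) ≤ φ.ker) : ∃ i ∈ s, N i ≤ φ.ker := by
  classical
  induction s using Finset.induction_on with
  | empty =>
      exfalso
      obtain ⟨x, y, hxy⟩ := hnonab
      obtain ⟨a, ha⟩ := hφ x
      obtain ⟨b, hb⟩ := hφ y
      have hx1 : φ a = 1 := h (by simp [Subgroup.mem_iInf])
      have hy1 : φ b = 1 := h (by simp [Subgroup.mem_iInf])
      rw [ha] at hx1; rw [hb] at hy1
      rw [hx1, hy1] at hxy
      exact hxy rfl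
  | @insert j₀ s hj₀ ih =>
      set M : Subgroup A := ⨅ i ∈ s, N i with hM
      have hMn : M.Normal := by
        constructor
        intro n hn g
        simp only [hM, Subgroup.mem_iInf] at hn ⊢
        intro i hi
        exact (hN i).conj_mem _ (hn i hi) g
      have hsub : N j₀ ⊓ M ≤ φ.ker := by
        refine le_trans ?_ h
        refine le_iInf fun i => le_iInf fun hi => ?_
        rcases Finset.mem_insert.mp hi with rfl | hi
        · exact inf_le_left
        · exact le_trans inf_le_right (iInf₂_le i hi)
      have key : ∀ m ∈ M, ∀ n ∈ N j₀, φ m * φ n = φ n * φ m := by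
        intro m hm n hn
        have hcM : m * n * m⁻¹ * n⁻¹ ∈ M := by
          have h1 : n * m⁻¹ * n⁻¹ ∈ M := hMn.conj_mem _ (M.inv_mem hm) n
          have h2 := M.mul_mem hm h1
          have he : m * n * m⁻¹ * n⁻¹ = m * (n * m⁻¹ * n⁻¹) := by group
          rwa [he]
        have hcN : m * n * m⁻¹ * n⁻¹ ∈ N j₀ := by
          have h1 : m * n * m⁻¹ ∈ N j₀ := (hN j₀).conj_mem _ hn m
          exact (N j₀).mul_mem h1 ((N j₀).inv_mem hn)
        have hker : m * n * m⁻¹ * n⁻¹ ∈ φ.ker := hsub (Subgroup.mem_inf.mpr ⟨hcN, hcM⟩)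
        have h1 : φ m * φ n * (φ m)⁻¹ * (φ n)⁻¹ = 1 := by
          simpa [MonoidHom.mem_ker, map_mul, map_inv] using hker
        have h2 : (φ m * φ n) * (φ n * φ m)⁻¹ = 1 := by
          rw [mul_inv_rev]
          group
          group at h1
          exact h1
        exact mul_inv_eq_one.mp h2
      rcases hsimple.eq_bot_or_eq_top_of_normal (Subgroup.map φ (N j₀)) ((hN j₀).map φ hφ)
          with hbot | htop
      · refine ⟨j₀, Finset.mem_insert_self _ _, fun x hx => ?_⟩
        have hmx : φ x ∈ Subgroup.map φ (N j₀) := Subgroup.mem_map_of_mem _ hx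
        rw [hbot] at hmx
        simpa [MonoidHom.mem_ker] using hmx
      · rcases hsimple.eq_bot_or_eq_top_of_normal (Subgroup.map φ M) (hMn.map φ hφ)
            with hbotM | htopM
        · have hMker : M ≤ φ.ker := by
            intro x hx
            have hmx : φ x ∈ Subgroup.map φ M := Subgroup.mem_map_of_mem _ hx
            rw [hbotM] at hmx
            simpa [MonoidHom.mem_ker] using hmx
          obtain ⟨i, hi, hle⟩ := ih hMker
          exact ⟨i, Finset.mem_insert_of_mem hi, hle⟩
        · exfalso
          obtain ⟨x, y, hxy⟩ := hnonab
          have hx : x ∈ Subgroup.map φ (N j₀) := htop ▸ Subgroup.mem_top x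
          have hy : y ∈ Subgroup.map φ M := htopM ▸ Subgroup.mem_top y
          obtain ⟨n, hn, rfl⟩ := hx
          obtain ⟨m, hm, rfl⟩ := hy
          exact hxy (key m hm n hn).symm

/-- Lubotzky's remark: for a finite nonabelian simple group `G` and any
word `v ∈ F_2`, there is a word `w ∈ F_2` with `w(a,b) = v(a,b)` whenever `⟨a,b⟩ = G`,
and `w(a,b) = 1` otherwise. -/
theorem word_agreeing_with_v_on_generating_pairs (G : Type) [Group G] [Fintype G]
    (hsimple : IsSimpleGroup G)
    (hnonab : ∃ x y : G, x * y ≠ y * x)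
    (v : FreeGroup (Fin 2)) :
    ∃ w : FreeGroup (Fin 2), ∀ a b : G,
      (Subgroup.closure {a, b} = ⊤ →
        FreeGroup.lift ![a, b] w = FreeGroup.lift ![a, b] v) ∧
      (Subgroup.closure {a, b} ≠ ⊤ → FreeGroup.lift ![a, b] w = 1) := by
  classical
  haveI := hsimple
  let e : G × G → (FreeGroup (Fin 2) →* G) := fun p => FreeGroup.lift ![p.1, p.2]
  have hrange : ∀ p : G × G, (e p).range = Subgroup.closure {p.1, p.2} := by
    intro p
    rw [FreeGroup.range_lift_eq_closure]
    congr 1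
    ext z
    constructor
    · rintro ⟨i, rfl⟩
      fin_cases i <;> simp
    · rintro (rfl | rfl)
      · exact ⟨0, rfl⟩
      · exact ⟨1, rfl⟩
  let gen : G × G → Prop := fun p => Subgroup.closure ({p.1, p.2} : Set G) = ⊤
  have hsurj : ∀ p, gen p → Function.Surjective (e p) := by
    intro p hp
    rw [← MonoidHom.range_eq_top, hrange p]
    exact hp
  -- non-generating kernels are not contained in generating kernels
  have hcard : ∀ p, ¬ gen p → ∀ r, gen r → ¬ ((e p).ker ≤ (e r).ker) := by
    intro p hp r hr hle
    have hfin : Finite (FreeGroup (Fin 2) ⧸ (e p).ker) :=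
      Finite.of_equiv _ (QuotientGroup.quotientKerEquivRange (e p)).symm.toEquiv
    let ψ : FreeGroup (Fin 2) ⧸ (e p).ker →* G :=
      QuotientGroup.lift _ (e r) (fun x hx => hle hx)
    have hψ : Function.Surjective ψ := by
      intro g
      obtain ⟨x, rfl⟩ := hsurj r hr g
      exact ⟨QuotientGroup.mk x, rfl⟩
    have h1 : Nat.card G ≤ Nat.card (FreeGroup (Fin 2) ⧸ (e p).ker) := Nat.card_le_card_of_surjective ψ hψ
    have h2 : Nat.card (FreeGroup (Fin 2) ⧸ (e p).ker) = Nat.card ((e p).range) :=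
      Nat.card_congr (QuotientGroup.quotientKerEquivRange (e p)).toEquiv
    have h3 : Nat.card ((e p).range) < Nat.card G := by
      refine lt_of_le_of_ne (Subgroup.card_le_card_group _) ?_
      intro heq
      exact hp (show Subgroup.closure ({p.1, p.2} : Set G) = ⊤ by
        rw [← hrange p]; exact Subgroup.eq_top_of_card_eq _ heq)
    omega
  have main : ∀ R : Finset (G × G), ∃ w : FreeGroup (Fin 2),
      (∀ p : G × G, ¬ gen p → e p w = 1) ∧ (∀ p ∈ R, gen p → e p w = e p v) := by
    intro R
    induction R using Finset.induction_on with
    | empty => exact ⟨1, fun p _ => map_one _, fun p hp => absurd hp (Finset.notMem_empty p)⟩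
    | @insert r R hrR ih =>
      obtain ⟨w, hw1, hw2⟩ := ih
      by_cases hgr : gen r
      · let J : Finset (G × G) := Finset.univ.filter (fun p => ¬ gen p) ∪ R
        let L : Subgroup (FreeGroup (Fin 2)) := ⨅ p ∈ J, (e p).ker
        have hmemL : ∀ x : FreeGroup (Fin 2), x ∈ L ↔ ∀ p ∈ J, e p x = 1 := by
          intro x
          simp [L, Subgroup.mem_iInf, MonoidHom.mem_ker]
        have hLn : L.Normal := by
          constructor
          intro n hn g
          rw [hmemL] at hn ⊢
          intro p hp
          simp [map_mul, hn p hp]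
        rcases hsimple.eq_bot_or_eq_top_of_normal (Subgroup.map (e r) L)
            (hLn.map (e r) (hsurj r hgr)) with hbot | htop
        · -- L ≤ ker (e r); find j with ker e j ≤ ker e r
          have hLker : L ≤ (e r).ker := by
            intro x hx
            have hmx : e r x ∈ Subgroup.map (e r) L := Subgroup.mem_map_of_mem _ hx
            rw [hbot] at hmx
            simpa [MonoidHom.mem_ker] using hmx
          obtain ⟨j, hjJ, hjle⟩ := exists_ker_le_aux hnonab hsimple J (fun p => (e p).ker)
            (fun i => MonoidHom.normal_ker _) (e r) (hsurj r hgr) hLker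
          by_cases hgj : gen j
          · have hjR : j ∈ R := by
              rcases Finset.mem_union.mp hjJ with hj | hj
              · exact absurd hgj (Finset.mem_filter.mp hj).2
              · exact hj
            have hv : e j w = e j v := hw2 j hjR hgj
            have hrw : e r w = e r v := by
              have hk : w * v⁻¹ ∈ (e j).ker := by
                simp [MonoidHom.mem_ker, map_mul, hv]
              have hk2 := hjle hk
              simp only [MonoidHom.mem_ker, map_mul, map_inv] at hk2
              exact mul_inv_eq_one.mp hk2
            refine ⟨w, hw1, fun p hp hgp => ?_⟩
            rcases Finset.mem_insert.mp hp with rfl | hp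
            · exact hrw
            · exact hw2 p hp hgp
          · exact absurd hjle (hcard j hgj r hgr)
        · -- surjective on L: correct w
          have hgmem : e r v * (e r w)⁻¹ ∈ Subgroup.map (e r) L := by
            rw [htop]; exact Subgroup.mem_top _
          obtain ⟨u, huL0, heu⟩ := hgmem
          have huL : ∀ p ∈ J, e p u = 1 := (hmemL u).mp huL0
          refine ⟨u * w, ?_, ?_⟩
          · intro p hp
            have hpJ : p ∈ J := Finset.mem_union_left _ (Finset.mem_filter.mpr ⟨Finset.mem_univ _, hp⟩)
            rw [map_mul, huL p hpJ, hw1 p hp, one_mul]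
          · intro p hp hgp
            rcases Finset.mem_insert.mp hp with rfl | hp
            · rw [map_mul, heu, inv_mul_cancel_right]
            · have hpJ : p ∈ J := Finset.mem_union_right _ hp
              rw [map_mul, huL p hpJ, one_mul, hw2 p hp hgp]
      · -- r not generating: same w works
        refine ⟨w, hw1, fun p hp hgp => ?_⟩
        rcases Finset.mem_insert.mp hp with rfl | hp
        · exact absurd hgp hgr
        · exact hw2 p hp hgp
  obtain ⟨w, hw1, hw2⟩ := main Finset.univ
  refine ⟨w, fun a b => ⟨fun h => hw2 (a, b) (Finset.mem_univ _) h, fun h => hw1 (a, b) h⟩⟩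
end

section
/- Let n ≥ 5 and let a ∈ Sym(n) be an odd permutation whose order is not a power of 2. Then there exists b ∈ Sym(n) such that ⟨a, b⟩ = Sym(n). -/
/-!
The partner `b` can be written down explicitly. Let `c` be the power of `a` whose order is the
odd part of `orderOf a` and `z` a point moved by `c`; then `z, c z, c² z` are distinct, and since
`a` is odd of order `≠ 2` it moves a point `w` outside them. Put `b = swap z (c z) * r` with `r` a
cycle on the complement of `{z, c z}`, or of `{z, c z, w}`, whichever has odd size. As `r` has odd
order, `r ∈ ⟨b²⟩`, so `⟨a, b⟩` contains `r` and `swap z (c z)`. Conjugating the latter by `c` and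
then by the powers of `r` yields every `swap (c z) u` with `u ≠ w`, and conjugating by `a` gives
`swap (c z) w` as well; these transpositions generate `Sym(n)`.
-/

open Equiv Equiv.Perm Subgroup Finset

theorem mem_zpowers_sq_of_odd_orderOf {G : Type*} [Group G] {g : G} (hg : Odd (orderOf g)) :
    g ∈ zpowers (g ^ 2) :=
  mem_zpowers_pow_iff.mpr (Nat.coprime_two_left.mpr hg)

theorem mem_zpowers_mul_of_commute {G : Type*} [Group G] {s r : G} (hsr : Commute s r)
    (hs : s ^ 2 = 1) (hr : Odd (orderOf r)) : r ∈ zpowers (s * r) := by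
  have hsq : (s * r) ^ 2 = r ^ 2 := by rw [hsr.mul_pow, hs, one_mul]
  exact zpowers_le.mpr (hsq ▸ pow_mem (mem_zpowers _) 2) (mem_zpowers_sq_of_odd_orderOf hr)

theorem exists_pow_odd_orderOf_ne_one {G : Type*} [Monoid G] {a : G} (ha : IsOfFinOrder a)
    (hord : ¬ ∃ m : ℕ, orderOf a = 2 ^ m) :
    ∃ k : ℕ, Odd (orderOf (a ^ k)) ∧ orderOf (a ^ k) ≠ 1 := by
  have ho : orderOf a ≠ 0 := ha.orderOf_pos.ne'
  refine ⟨orderOf a / ordCompl[2] (orderOf a), ?_⟩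
  rw [orderOf_pow_orderOf_div ho (Nat.ordCompl_dvd _ _)]
  refine ⟨Nat.odd_iff.mpr (Nat.two_dvd_ne_zero.mp (Nat.not_dvd_ordCompl Nat.prime_two ho)), ?_⟩
  intro h
  exact hord ⟨_, by simpa [h] using (Nat.ordProj_mul_ordCompl_eq_self (orderOf a) 2).symm⟩

theorem Finset.exists_erase_subset_subset_odd_card {α : Type*} [DecidableEq α] {T : Finset α}
    {w : α} (hw : w ∈ T) (hT : 3 ≤ #T) : ∃ R, T.erase w ⊆ R ∧ R ⊆ T ∧ Odd #R ∧ 3 ≤ #R := by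
  rcases Nat.even_or_odd #T with ⟨m, hm⟩ | hodd
  · refine ⟨T.erase w, subset_rfl, erase_subset w T, ?_⟩
    rw [card_erase_of_mem hw]
    exact ⟨⟨m - 1, by omega⟩, by omega⟩
  · exact ⟨T, erase_subset w T, subset_rfl, hodd, hT⟩

namespace Equiv.Perm

variable {α : Type*}

theorem apply_apply_ne_of_odd_orderOf {c : Perm α} (hc : Odd (orderOf c)) {z : α}
    (hz : c z ≠ z) : c (c z) ≠ z := by
  intro hzz
  obtain ⟨k, hk⟩ := mem_zpowers_iff.mp (mem_zpowers_sq_of_odd_orderOf hc)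
  apply hz
  rw [← hk]
  exact zpow_apply_eq_self_of_apply_eq_self (by rwa [sq, mul_apply]) k

variable [DecidableEq α] [Fintype α]

theorem four_le_card_support_of_sign_eq_neg_one {a : Perm α} (hsign : sign a = -1)
    (hord : orderOf a ≠ 2) : 4 ≤ #a.support := by
  by_contra! h
  interval_cases hcard : #a.support
  · simp [card_support_eq_zero.mp hcard] at hsign
  · exact card_support_ne_one a hcard
  · exact hord (card_support_eq_two.mp hcard).orderOf
  · simp [(card_support_eq_three_iff.mp hcard).sign] at hsign

theorem _root_.Finset.exists_isCycle_support_eq (s : Finset α) (hs : 2 ≤ #s) :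
    ∃ r : Perm α, r.IsCycle ∧ r.support = s := by
  have hlen : 2 ≤ s.toList.length := by rwa [Finset.length_toList]
  refine ⟨s.toList.formPerm, List.isCycle_formPerm s.nodup_toList hlen, ?_⟩
  rw [List.support_formPerm_of_nodup _ s.nodup_toList, toList_toFinset]
  rintro x hx
  simp [hx] at hlen

theorem eq_top_of_forall_swap_mem {H : Subgroup (Perm α)} (y : α)
    (h : ∀ u, swap y u ∈ H) : H = ⊤ := by
  rw [eq_top_iff, ← closure_isSwap, closure_le]
  rintro τ ⟨u, v, -, rfl⟩
  exact SubmonoidClass.swap_mem_trans H (swap_comm y u ▸ h u) (h v)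

theorem swap_mem_of_isCycle {H : Subgroup (Perm α)} {r : Perm α} (hr : r.IsCycle) (hrH : r ∈ H)
    {x y : α} (hx : x ∈ r.support) (hy : y ∉ r.support) (hxy : swap y x ∈ H)
    {u : α} (hu : u ∈ r.support) : swap y u ∈ H := by
  obtain ⟨k, rfl⟩ := hr.exists_pow_eq (mem_support.mp hx) (mem_support.mp hu)
  have hky : (r ^ k) y = y := pow_apply_eq_self_of_apply_eq_self (notMem_support.mp hy) k
  rw [← hky, swap_apply_apply]
  exact mul_mem (mul_mem (pow_mem hrH k) hxy) (inv_mem (pow_mem hrH k))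

theorem eq_top_of_forall_ne_swap_mem {H : Subgroup (Perm α)} (hα : 3 ≤ Fintype.card α)
    {a : Perm α} (ha : a ∈ H) {w y : α} (hw : a w ≠ w) (h : ∀ u ≠ w, swap y u ∈ H) : H = ⊤ := by
  refine eq_top_of_forall_swap_mem y fun u => ?_
  obtain hu | rfl := ne_or_eq u w
  · exact h u hu
  obtain ⟨v, -, hv⟩ := exists_mem_notMem_of_card_lt_card (s := {u, a⁻¹ u}) (t := univ)
    ((card_le_two).trans_lt (by rwa [card_univ]))
  simp only [mem_insert, mem_singleton, not_or] at hv
  have hau : a⁻¹ u ≠ u := fun h' => hw (inv_eq_iff_eq.mp h').symm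
  have hav : a v ≠ u := fun h' => hv.2 (inv_eq_iff_eq.mpr h'.symm).symm
  have hswap : swap (a⁻¹ u) v ∈ H :=
    SubmonoidClass.swap_mem_trans H (swap_comm y _ ▸ h _ hau) (h v hv.1)
  have hconj : swap u (a v) ∈ H := by
    have := mul_mem (mul_mem ha hswap) (inv_mem ha)
    rwa [← swap_apply_apply, Perm.coe_inv, apply_symm_apply] at this
  exact SubmonoidClass.swap_mem_trans H (h _ hav) (swap_comm u _ ▸ hconj)

theorem swap_mem_of_swap_mul_isCycle_mem {H : Subgroup (Perm α)} {c r : Perm α} (hc : c ∈ H)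
    (hr : r.IsCycle) (hodd : Odd #r.support) {z : α} (hrz : r.support ⊆ {z, c z}ᶜ)
    (hccz : c (c z) ∈ r.support) (hb : swap z (c z) * r ∈ H)
    {u : α} (hu : u ∈ r.support ∨ u = z ∨ u = c z) : swap (c z) u ∈ H := by
  have hdisj : Disjoint (swap z (c z)) r := by
    intro x
    by_cases hx : x ∈ r.support
    · have hx' := hrz hx
      simp only [mem_compl, mem_insert, mem_singleton, not_or] at hx'
      exact .inl (swap_apply_of_ne_of_ne hx'.1 hx'.2)
    · exact .inr (notMem_support.mp hx)
  have hrH : r ∈ H := zpowers_le.mpr hb <|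
    mem_zpowers_mul_of_commute hdisj.commute (by rw [sq, swap_mul_self]) (hr.orderOf ▸ hodd)
  have hs : swap z (c z) ∈ H := by simpa using mul_mem hb (inv_mem hrH)
  have hcs : swap (c z) (c (c z)) ∈ H := by
    rw [swap_apply_apply]
    exact mul_mem (mul_mem hc hs) (inv_mem hc)
  rcases hu with hu | rfl | rfl
  · exact swap_mem_of_isCycle hr hrH hccz (fun h => by simpa using hrz h) hcs hu
  · rwa [swap_comm]
  · rw [swap_self, ← Perm.one_def]
    exact one_mem H

end Equiv.Perm

/-- for `n ≥ 5`, every odd permutation in `Sym(n)` whose order is not a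
power of `2` is part of a generating pair of `Sym(n)`. -/
theorem odd_perm_not_two_power_order_part_of_generating_pair (n : ℕ) (hn : 5 ≤ n)
    (a : Equiv.Perm (Fin n))
    (hodd : Equiv.Perm.sign a = -1)
    (hord : ¬ ∃ m : ℕ, orderOf a = 2 ^ m) :
    ∃ b : Equiv.Perm (Fin n), Subgroup.closure {a, b} = ⊤ := by
  obtain ⟨k, hc_odd, hc_one⟩ := exists_pow_odd_orderOf_ne_one (isOfFinOrder_of_finite a) hord
  set c := a ^ k
  obtain ⟨z, hz⟩ : ∃ z, c z ≠ z :=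
    not_forall.mp fun h => hc_one (orderOf_eq_one_iff.mpr (Equiv.ext h))
  have hzz : c (c z) ≠ z := apply_apply_ne_of_odd_orderOf hc_odd hz
  obtain ⟨w, hwa, hw⟩ : ∃ w, a w ≠ w ∧ w ∉ ({z, c z, c (c z)} : Finset (Fin n)) := by
    obtain ⟨w, hw, hw'⟩ := exists_mem_notMem_of_card_lt_card <|
      card_le_three.trans_lt (four_le_card_support_of_sign_eq_neg_one hodd fun h => hord ⟨1, h⟩)
    exact ⟨w, mem_support.mp hw, hw'⟩
  simp only [mem_insert, mem_singleton, not_or] at hw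
  have hT : 3 ≤ #({z, c z}ᶜ : Finset (Fin n)) := by
    rw [card_compl, card_pair hz.symm, Fintype.card_fin]
    omega
  obtain ⟨R, hTR, hRT, hRodd, hR3⟩ :=
    exists_erase_subset_subset_odd_card (w := w) (by simp [hw]) hT
  obtain ⟨r, hr, rfl⟩ := R.exists_isCycle_support_eq (by omega)
  refine ⟨swap z (c z) * r, ?_⟩
  have ha : a ∈ closure {a, swap z (c z) * r} := subset_closure (Set.mem_insert _ _)
  refine eq_top_of_forall_ne_swap_mem (by simp; omega) ha hwa (y := c z) fun u hu => ?_
  have hcczR : c (c z) ∈ r.support := hTR (by simp [hzz, c.injective.ne hz, Ne.symm hw.2.2])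
  refine swap_mem_of_swap_mul_isCycle_mem (pow_mem ha k) hr hRodd hRT hcczR
    (subset_closure (Set.mem_insert_of_mem _ rfl)) (Or.imp_left (hTR ·) ?_)
  simp only [mem_erase, mem_compl, mem_insert, mem_singleton]
  tauto
end
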